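/- For every integer n ≥ 2, a displacement u : H_n → ℝ² of the hexagonal array of side n produces zero elongation on every edge (κ_u = 0) if and only if u is an infinitesimal rigid motion, i.e. there exist c ∈ ℝ² and t ∈ ℝ such that u(p) = c + t·J(e(p)) for all p ∈ H_n, where J is rotation of the plane by 90°. In particular the kernel of the elongation map R : (ℝ²)^{H_n} → ℝ^{Edges}, R(u) = κ_u, has dimension 3. -/

import Mathlib

open scoped Classical

/-- The hexagonal array of side `n`: nodes `(i,j) ∈ ℤ²` with `|i| ≤ n-1`, `|j| ≤ n-1`,
`|i+j| ≤ n-1`. -/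
noncomputable def hexNodes (n : ℤ) : Finset (ℤ × ℤ) :=
  (Finset.Icc ((-(n-1), -(n-1)) : ℤ × ℤ) ((n-1, n-1) : ℤ × ℤ)).filter
    (fun p => |p.1 + p.2| ≤ n - 1)

/-- The three lattice directions `(1,0)`, `(0,1)`, `(-1,1)`. -/
def hexDirs : Finset (ℤ × ℤ) := {(1,0), (0,1), (-1,1)}

/-- The edges of the hexagonal array of side `n`: unordered pairs `{p, p+d}` with both
endpoints in `hexNodes n` and `d` one of the three lattice directions. -/
noncomputable def hexEdges (n : ℤ) : Finset (Sym2 (ℤ × ℤ)) :=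
  (((hexNodes n) ×ˢ hexDirs).filter (fun pd => pd.1 + pd.2 ∈ hexNodes n)).image
    (fun pd => s(pd.1, pd.1 + pd.2))

/-- Interior nodes: all six neighbors lie in the array. -/
noncomputable def interiorNodes (n : ℤ) : Finset (ℤ × ℤ) :=
  (hexNodes n).filter (fun p => ∀ d ∈ hexDirs, p + d ∈ hexNodes n ∧ p - d ∈ hexNodes n)

/-- Embedding of the lattice in the Euclidean plane: `e(i,j) = i·(1,0) + j·(1/2, √3/2)`,
so that every edge has unit length. -/
noncomputable def emb (p : ℤ × ℤ) : ℝ × ℝ :=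
  ((p.1 : ℝ) + (p.2 : ℝ) / 2, (p.2 : ℝ) * (Real.sqrt 3 / 2))

/-- The Euclidean inner product on `ℝ²`. -/
def dot (a b : ℝ × ℝ) : ℝ := a.1 * b.1 + a.2 * b.2

/-- The elongation of the unordered pair `{p, q}` induced by a displacement `u`:
`κ_u({p,q}) = (e(q) - e(p)) · (u(q) - u(p))`. -/
noncomputable def kap (u : ℤ × ℤ → ℝ × ℝ) : Sym2 (ℤ × ℤ) → ℝ :=
  Sym2.lift ⟨fun p q => dot (emb q - emb p) (u q - u p), fun p q => by
    simp only [dot, Prod.fst_sub, Prod.snd_sub]; ring⟩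

/-- Rotation of the plane by 90 degrees. -/
def rot90 (a : ℝ × ℝ) : ℝ × ℝ := (-a.2, a.1)

/-- The elongation map as a linear map in the displacement. -/
noncomputable def kapL : (ℤ × ℤ → ℝ × ℝ) →ₗ[ℝ] (Sym2 (ℤ × ℤ) → ℝ) where
  toFun := kap
  map_add' x y := by
    funext e
    induction e using Sym2.ind with
    | _ p q => simp [kap, dot]; ring
  map_smul' c x := by
    funext e
    induction e using Sym2.ind with
    | _ p q => simp [kap, dot]; ring

/-- Extension by zero of a displacement defined on the nodes of the array. -/
noncomputable def extendL (n : ℤ) :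
    ({p : ℤ × ℤ // p ∈ hexNodes n} → ℝ × ℝ) →ₗ[ℝ] (ℤ × ℤ → ℝ × ℝ) where
  toFun u p := if h : p ∈ hexNodes n then u ⟨p, h⟩ else 0
  map_add' x y := by funext p; by_cases h : p ∈ hexNodes n <;> simp [h]
  map_smul' c x := by funext p; by_cases h : p ∈ hexNodes n <;> simp [h]

/-- The elongation map `R : (ℝ²)^{H_n} → ℝ^{Edges}`, `R(u) = κ_u`. -/
noncomputable def Rmap (n : ℤ) :
    ({p : ℤ × ℤ // p ∈ hexNodes n} → ℝ × ℝ) →ₗ[ℝ] ({e : Sym2 (ℤ × ℤ) // e ∈ hexEdges n} → ℝ) :=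
  (LinearMap.funLeft ℝ ℝ (Subtype.val : {e : Sym2 (ℤ × ℤ) // e ∈ hexEdges n} → Sym2 (ℤ × ℤ))).comp
    (kapL.comp (extendL n))

/-!
Subtracting an infinitesimal rigid motion we may assume that `u` vanishes at both ends of the
edge `(0, 0)(1, 0)`. If a displacement with zero elongations vanishes at two vertices of a unit
triangle, it vanishes at the third, since its value there is orthogonal to two independent edge
vectors. Chains of triangles spread the zeros along the row `j = 0` to the right, and from each
row `j ≥ 0` to the next one; the central symmetry `p ↦ -p` of the array does the rest. The
kernel of `R` is then the image of the injective linear map `(c, t) ↦ c + t • J e(·)` on `ℝ³`.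
-/

lemma mem_hexNodes {n i j : ℤ} : (i, j) ∈ hexNodes n ↔
    -(n-1) ≤ i ∧ i ≤ n-1 ∧ -(n-1) ≤ j ∧ j ≤ n-1 ∧ -(n-1) ≤ i+j ∧ i+j ≤ n-1 := by
  simp only [hexNodes, Finset.mem_filter, Finset.mem_Icc, Prod.mk_le_mk, abs_le]
  omega

lemma mem_hexDirs {a b : ℤ} :
    (a, b) ∈ hexDirs ↔ a = 1 ∧ b = 0 ∨ a = 0 ∧ b = 1 ∨ a = -1 ∧ b = 1 := by
  simp [hexDirs]

lemma mem_hexEdges {n : ℤ} {p q : ℤ × ℤ} : s(p, q) ∈ hexEdges n ↔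
    p ∈ hexNodes n ∧ q ∈ hexNodes n ∧ (q - p ∈ hexDirs ∨ p - q ∈ hexDirs) := by
  simp only [hexEdges, Finset.mem_image, Finset.mem_filter, Finset.mem_product, Sym2.eq_iff]
  constructor
  · rintro ⟨⟨a, d⟩, ⟨⟨ha, hd⟩, had⟩, ⟨rfl, rfl⟩ | ⟨rfl, rfl⟩⟩ <;> simp [ha, had, hd]
  · rintro ⟨hp, hq, hd | hd⟩
    · exact ⟨(p, q - p), by simp [hp, hq, hd]⟩
    · exact ⟨(q, p - q), by simp [hp, hq, hd]⟩

lemma mk_mem_hexEdges {n i j k l : ℤ} : s((i, j), (k, l)) ∈ hexEdges n ↔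
    (i, j) ∈ hexNodes n ∧ (k, l) ∈ hexNodes n ∧
      ((k - i, l - j) ∈ hexDirs ∨ (i - k, j - l) ∈ hexDirs) :=
  mem_hexEdges

lemma neg_mem_hexNodes {n : ℤ} {p : ℤ × ℤ} : -p ∈ hexNodes n ↔ p ∈ hexNodes n := by
  obtain ⟨i, j⟩ := p
  rw [Prod.neg_mk, mem_hexNodes, mem_hexNodes]
  omega

lemma kap_mk (u : ℤ × ℤ → ℝ × ℝ) (p q : ℤ × ℤ) :
    kap u s(p, q) = dot (emb q - emb p) (u q - u p) := rfl

lemma emb_sub (p q : ℤ × ℤ) : emb p - emb q = emb (p - q) := by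
  ext <;> simp [emb] <;> ring

lemma emb_neg (p : ℤ × ℤ) : emb (-p) = -emb p := by
  ext <;> simp [emb]; ring

lemma det_emb (a b : ℤ × ℤ) :
    (emb a).1 * (emb b).2 - (emb a).2 * (emb b).1 = (a.1 * b.2 - a.2 * b.1 : ℤ) * (√3 / 2) := by
  simp only [emb]; push_cast; ring

lemma eq_zero_of_dot_eq_zero {v₁ v₂ x : ℝ × ℝ} (hdet : v₁.1 * v₂.2 - v₁.2 * v₂.1 ≠ 0)
    (h₁ : dot v₁ x = 0) (h₂ : dot v₂ x = 0) : x = 0 := by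
  unfold dot at h₁ h₂
  have hx₁ : x.1 * (v₁.1 * v₂.2 - v₁.2 * v₂.1) = 0 := by linear_combination v₂.2 * h₁ - v₁.2 * h₂
  have hx₂ : x.2 * (v₁.1 * v₂.2 - v₁.2 * v₂.1) = 0 := by linear_combination v₁.1 * h₂ - v₂.1 * h₁
  exact Prod.ext ((mul_eq_zero.1 hx₁).resolve_right hdet) ((mul_eq_zero.1 hx₂).resolve_right hdet)

lemma eq_zero_of_triangle {n : ℤ} {w : ℤ × ℤ → ℝ × ℝ} (hw : ∀ e ∈ hexEdges n, kap w e = 0)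
    {p q r : ℤ × ℤ} (hpr : s(p, r) ∈ hexEdges n) (hqr : s(q, r) ∈ hexEdges n)
    (hind : (r - p).1 * (r - q).2 ≠ (r - p).2 * (r - q).1) (hp : w p = 0) (hq : w q = 0) :
    w r = 0 := by
  have hpr' := hw _ hpr
  have hqr' := hw _ hqr
  rw [kap_mk, hp, sub_zero, emb_sub] at hpr'
  rw [kap_mk, hq, sub_zero, emb_sub] at hqr'
  refine eq_zero_of_dot_eq_zero ?_ hpr' hqr'
  rw [det_emb]
  exact mul_ne_zero (by exact_mod_cast sub_ne_zero.2 hind) (by positivity)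

lemma kap_comp_neg (w : ℤ × ℤ → ℝ × ℝ) (p q : ℤ × ℤ) :
    kap (fun x => w (-x)) s(p, q) = -kap w s(-p, -q) := by
  simp only [kap_mk, emb_neg, dot, Prod.fst_sub, Prod.snd_sub, Prod.fst_neg, Prod.snd_neg]
  ring

lemma kap_comp_neg_eq_zero {n : ℤ} {w : ℤ × ℤ → ℝ × ℝ} (hw : ∀ e ∈ hexEdges n, kap w e = 0) :
    ∀ e ∈ hexEdges n, kap (fun x => w (-x)) e = 0 := by
  intro e he
  induction e using Sym2.ind with
  | _ p q =>
    obtain ⟨hp, hq, hd⟩ := mem_hexEdges.1 he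
    have hneg : s(-p, -q) ∈ hexEdges n := by
      refine mem_hexEdges.2 ⟨neg_mem_hexNodes.2 hp, neg_mem_hexNodes.2 hq, ?_⟩
      rwa [neg_sub_neg, neg_sub_neg, or_comm]
    rw [kap_comp_neg, hw _ hneg, neg_zero]

lemma eq_zero_on_row_of_adjacent {n : ℤ} {w : ℤ × ℤ → ℝ × ℝ} (hw : ∀ e ∈ hexEdges n, kap w e = 0)
    {a : ℤ} (ha : (a, 0) ∈ hexNodes n) (h₀ : w (a, 0) = 0) (h₁ : w (a + 1, 0) = 0) :
    ∀ i, a ≤ i → (i, 0) ∈ hexNodes n → w (i, 0) = 0 := by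
  rw [mem_hexNodes] at ha
  have step : ∀ i, a ≤ i → (i + 1, 0) ∈ hexNodes n → w (i, 0) = 0 ∧ w (i + 1, 0) = 0 := by
    intro i hi
    induction i, hi using Int.leInduction with
    | base => exact fun _ => ⟨h₀, h₁⟩
    | succ i hi ih =>
      intro hmem
      rw [mem_hexNodes] at hmem
      have hi₁ := (ih (mem_hexNodes.2 (by omega))).2
      have hb : w (i + 1, -1) = 0 := eq_zero_of_triangle hw (p := (i, 0)) (q := (i + 1, 0))
        (by simp only [mk_mem_hexEdges, mem_hexNodes, mem_hexDirs]; omega)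
        (by simp only [mk_mem_hexEdges, mem_hexNodes, mem_hexDirs]; omega) (by simp)
        (ih (mem_hexNodes.2 (by omega))).1 hi₁
      have hc : w (i + 2, -1) = 0 := eq_zero_of_triangle hw (p := (i + 1, 0)) (q := (i + 1, -1))
        (by simp only [mk_mem_hexEdges, mem_hexNodes, mem_hexDirs]; omega)
        (by simp only [mk_mem_hexEdges, mem_hexNodes, mem_hexDirs]; omega) (by simp) hi₁ hb
      exact ⟨hi₁, eq_zero_of_triangle hw (p := (i + 1, 0)) (q := (i + 2, -1))
        (by simp only [mk_mem_hexEdges, mem_hexNodes, mem_hexDirs]; omega)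
        (by simp only [mk_mem_hexEdges, mem_hexNodes, mem_hexDirs]; omega) (by simp) hi₁ hc⟩
  intro i hi hmem
  rcases hi.eq_or_lt with rfl | hlt
  · exact h₀
  · simpa using (step (i - 1) (by omega) (by simpa using hmem)).2

lemma eq_zero_upper_of_row_eq_zero {n : ℤ} {w : ℤ × ℤ → ℝ × ℝ} (hw : ∀ e ∈ hexEdges n, kap w e = 0)
    (hrow : ∀ i, (i, 0) ∈ hexNodes n → w (i, 0) = 0) :
    ∀ j, 0 ≤ j → ∀ i, (i, j) ∈ hexNodes n → w (i, j) = 0 := by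
  intro j hj
  induction j, hj using Int.leInduction with
  | base => exact hrow
  | succ j hj ih =>
    intro i hmem
    rw [mem_hexNodes] at hmem
    exact eq_zero_of_triangle hw (p := (i, j)) (q := (i + 1, j))
      (by simp only [mk_mem_hexEdges, mem_hexNodes, mem_hexDirs]; omega)
      (by simp only [mk_mem_hexEdges, mem_hexNodes, mem_hexDirs]; omega) (by simp)
      (ih i (mem_hexNodes.2 (by omega))) (ih (i + 1) (mem_hexNodes.2 (by omega)))

lemma eq_zero_on_hexNodes {n : ℤ} (hn : 2 ≤ n) {w : ℤ × ℤ → ℝ × ℝ}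
    (hw : ∀ e ∈ hexEdges n, kap w e = 0) (h₀ : w (0, 0) = 0) (h₁ : w (1, 0) = 0) :
    ∀ p ∈ hexNodes n, w p = 0 := by
  have hw' := kap_comp_neg_eq_zero hw
  have hrow : ∀ i, (i, 0) ∈ hexNodes n → w (i, 0) = 0 := by
    intro i hi
    rcases le_total 0 i with h | h
    · exact eq_zero_on_row_of_adjacent hw (mem_hexNodes.2 (by omega)) h₀ (by simpa using h₁) i h hi
    · simpa using eq_zero_on_row_of_adjacent hw' (a := -1) (mem_hexNodes.2 (by omega))
        (by simpa using h₁) (by simpa using h₀) (-i) (by omega)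
        (by simpa using neg_mem_hexNodes.2 hi)
  rintro ⟨i, j⟩ hp
  rcases le_total 0 j with h | h
  · exact eq_zero_upper_of_row_eq_zero hw hrow j h i hp
  · simpa using eq_zero_upper_of_row_eq_zero hw'
      (fun i hi => by simpa using hrow (-i) (by simpa using neg_mem_hexNodes.2 hi))
      (-j) (by omega) (-i) (by simpa using neg_mem_hexNodes.2 hp)

noncomputable def rigidMotion (c : ℝ × ℝ) (t : ℝ) (p : ℤ × ℤ) : ℝ × ℝ := c + t • rot90 (emb p)

lemma rigidMotion_zero_zero (c : ℝ × ℝ) (t : ℝ) : rigidMotion c t (0, 0) = c := by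
  simp [rigidMotion, emb, rot90]

lemma rigidMotion_one_zero (c : ℝ × ℝ) (t : ℝ) : rigidMotion c t (1, 0) = (c.1, c.2 + t) := by
  ext <;> simp [rigidMotion, emb, rot90]

lemma kap_rigidMotion (c : ℝ × ℝ) (t : ℝ) (e : Sym2 (ℤ × ℤ)) : kap (rigidMotion c t) e = 0 := by
  induction e using Sym2.ind with
  | _ p q =>
    simp only [kap_mk, rigidMotion, dot, rot90, Prod.fst_sub, Prod.snd_sub, Prod.fst_add,
      Prod.snd_add, Prod.smul_fst, Prod.smul_snd, smul_eq_mul]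
    ring

lemma kap_sub (u v : ℤ × ℤ → ℝ × ℝ) (e : Sym2 (ℤ × ℤ)) : kap (u - v) e = kap u e - kap v e :=
  congrFun (map_sub kapL u v) e

lemma kap_eq_zero_of_eqOn_rigidMotion {n : ℤ} {u : ℤ × ℤ → ℝ × ℝ} {c : ℝ × ℝ} {t : ℝ}
    (h : ∀ p ∈ hexNodes n, u p = rigidMotion c t p) : ∀ e ∈ hexEdges n, kap u e = 0 := by
  intro e he
  induction e using Sym2.ind with
  | _ p q =>
    obtain ⟨hp, hq, -⟩ := mem_hexEdges.1 he
    rw [kap_mk, h p hp, h q hq, ← kap_mk, kap_rigidMotion]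

lemma exists_rigidMotion_of_kap_eq_zero {n : ℤ} (hn : 2 ≤ n) {u : ℤ × ℤ → ℝ × ℝ}
    (hu : ∀ e ∈ hexEdges n, kap u e = 0) :
    ∃ c t, ∀ p ∈ hexNodes n, u p = rigidMotion c t p := by
  -- `c` and `t` match `u` at `(0, 0)` and the normal component of `u (1, 0)`; the tangential
  -- component then matches because the edge `(0, 0)(1, 0)` has zero elongation
  set c := u (0, 0)
  set t := (u (1, 0)).2 - (u (0, 0)).2
  have hw : ∀ e ∈ hexEdges n, kap (u - rigidMotion c t) e = 0 := fun e he => by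
    rw [kap_sub, hu e he, kap_rigidMotion, sub_zero]
  have h₀ : (u - rigidMotion c t) (0, 0) = 0 := by simp [rigidMotion_zero_zero, c]
  have h₁ : (u - rigidMotion c t) (1, 0) = 0 := by
    have hedge : (u (1, 0)).1 - (u (0, 0)).1 = 0 := by
      simpa [kap_mk, dot, emb] using
        hu s((0, 0), (1, 0)) (by simp only [mk_mem_hexEdges, mem_hexNodes, mem_hexDirs]; omega)
    ext <;> simp [rigidMotion_one_zero, c, t, hedge]
  exact ⟨c, t, fun p hp => sub_eq_zero.1 (eq_zero_on_hexNodes hn hw h₀ h₁ p hp)⟩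

noncomputable def rigidL (n : ℤ) : ((ℝ × ℝ) × ℝ) →ₗ[ℝ] ({p : ℤ × ℤ // p ∈ hexNodes n} → ℝ × ℝ) :=
  LinearMap.pi fun p => LinearMap.fst ℝ (ℝ × ℝ) ℝ +
    (LinearMap.snd ℝ (ℝ × ℝ) ℝ).smulRight (rot90 (emb p))

lemma rigidL_apply (n : ℤ) (ct : (ℝ × ℝ) × ℝ) (p : {p : ℤ × ℤ // p ∈ hexNodes n}) :
    rigidL n ct p = rigidMotion ct.1 ct.2 p := rfl

lemma rigidL_injective {n : ℤ} (hn : 2 ≤ n) : Function.Injective (rigidL n) := by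
  rw [← LinearMap.ker_eq_bot, LinearMap.ker_eq_bot']
  rintro ⟨c, t⟩ h
  have h₀ := congrFun h ⟨(0, 0), mem_hexNodes.2 (by omega)⟩
  have h₁ := congrFun h ⟨(1, 0), mem_hexNodes.2 (by omega)⟩
  rw [rigidL_apply, rigidMotion_zero_zero] at h₀
  rw [rigidL_apply, rigidMotion_one_zero, h₀] at h₁
  simp_all

lemma ker_Rmap_eq_range {n : ℤ} (hn : 2 ≤ n) :
    LinearMap.ker (Rmap n) = LinearMap.range (rigidL n) := by
  ext u
  have hext : ∀ p (hp : p ∈ hexNodes n), extendL n u p = u ⟨p, hp⟩ := fun p hp => dif_pos hp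
  have hRmap : Rmap n u = 0 ↔ ∀ e ∈ hexEdges n, kap (extendL n u) e = 0 := by
    simp [funext_iff, Rmap, kapL]
  rw [LinearMap.mem_ker, LinearMap.mem_range, hRmap]
  constructor
  · intro h
    obtain ⟨c, t, hct⟩ := exists_rigidMotion_of_kap_eq_zero hn h
    exact ⟨(c, t), funext fun p => by rw [rigidL_apply, ← hct p p.2, hext]⟩
  · rintro ⟨⟨c, t⟩, rfl⟩
    exact kap_eq_zero_of_eqOn_rigidMotion fun p hp => by rw [hext p hp, rigidL_apply]

/-- for `n ≥ 2`, a displacement produces zero elongation on every edge iff it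
is an infinitesimal rigid motion `u(p) = c + t·J(e(p))` on the nodes; in particular the
kernel of the elongation map `R` has dimension 3. -/
theorem kernel_of_elongation_map (n : ℤ) (hn : 2 ≤ n) :
    (∀ u : ℤ × ℤ → ℝ × ℝ,
      (∀ e ∈ hexEdges n, kap u e = 0) ↔
        ∃ (c : ℝ × ℝ) (t : ℝ), ∀ p ∈ hexNodes n, u p = c + t • rot90 (emb p)) ∧
    Module.finrank ℝ (LinearMap.ker (Rmap n)) = 3 := by
  refine ⟨fun u => ⟨exists_rigidMotion_of_kap_eq_zero hn,
    fun ⟨c, t, h⟩ => kap_eq_zero_of_eqOn_rigidMotion h⟩, ?_⟩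
  rw [ker_Rmap_eq_range hn, LinearMap.finrank_range_of_inj (rigidL_injective hn)]
  simp
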